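/- arXiv:2007.11609 — 2 statements merged into one kernel-verified Lean document; each statement's English description precedes it below -/
import Mathlib

section
/- Let m ≥ 1 and let L be a binary code of length m with cardinality M = |L|. Then the average Hamming distance of L satisfies ahd(L) ≥ (m+1)/2 − 2^(m−1)/M. -/
/-!
Write `s_i = ∑_{x ∈ L} (-1)^{x_i}`. Coordinatewise, `∑_{x,y ∈ L} hd(x,y) = (m M² - ∑ᵢ s_i²) / 2`.
The `M`, `s_1, …, s_m` are the inner products of the indicator of `L` with the `m + 1` Walsh
characters of degree at most one, which are pairwise orthogonal of squared norm `2^m`, so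
Bessel's inequality gives `M² + ∑ᵢ s_i² ≤ 2^m M`.
-/

open Finset

/-- Bessel's inequality for an orthogonal family of common squared norm `N`. -/
theorem sum_sq_sum_mul_le_of_orthogonal {W A : Type*} [Fintype W] [Fintype A] [DecidableEq A]
    (φ : A → W → ℝ) {N : ℝ} (hN : 0 < N)
    (horth : ∀ a b, ∑ w, φ a w * φ b w = if a = b then N else 0) (f : W → ℝ) :
    ∑ a, (∑ w, f w * φ a w) ^ 2 ≤ N * ∑ w, f w ^ 2 := by
  set c : A → ℝ := fun a => ∑ w, f w * φ a w
  set p : W → ℝ := fun w => ∑ a, c a * φ a w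
  have hpp : ∑ w, p w ^ 2 = N * ∑ a, c a ^ 2 := calc
    ∑ w, p w ^ 2 = ∑ a, ∑ b, c a * c b * ∑ w, φ a w * φ b w := by
      simp_rw [p, sq, sum_mul_sum, mul_sum]
      rw [sum_comm]
      exact sum_congr rfl fun a _ => by rw [sum_comm]; simp only [mul_mul_mul_comm]
    _ = N * ∑ a, c a ^ 2 := by simp [horth, mul_sum, sq, mul_comm]
  have hfp : ∑ w, f w * p w = ∑ a, c a ^ 2 := calc
    ∑ w, f w * p w = ∑ a, c a * ∑ w, f w * φ a w := by
      simp_rw [p, mul_sum]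
      rw [sum_comm]
      exact sum_congr rfl fun a _ => sum_congr rfl fun w _ => by ring
    _ = ∑ a, c a ^ 2 := by simp only [c, sq]
  have hexp : ∑ w, (N * f w - p w) ^ 2
      = N ^ 2 * ∑ w, f w ^ 2 - 2 * N * ∑ w, f w * p w + ∑ w, p w ^ 2 := by
    simp only [sub_sq, sum_add_distrib, sum_sub_distrib, mul_sum]
    congr 2 <;> exact sum_congr rfl fun w _ => by ring
  have hsq : 0 ≤ ∑ w, (N * f w - p w) ^ 2 := sum_nonneg fun w _ => sq_nonneg _
  rw [hexp, hpp, hfp] at hsq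
  nlinarith

def boolSign (b : Bool) : ℝ := if b then -1 else 1

@[simp] lemma boolSign_not (b : Bool) : boolSign (!b) = -boolSign b := by
  cases b <;> simp [boolSign]

@[simp] lemma boolSign_mul_self (b : Bool) : boolSign b * boolSign b = 1 := by
  cases b <;> simp [boolSign]

section BinaryWords

variable {ι : Type*} [Fintype ι]

lemma sum_eq_zero_of_update_not [DecidableEq ι] {g : (ι → Bool) → ℝ} (i : ι)
    (hg : ∀ w, g (Function.update w i (!w i)) = -g w) : ∑ w, g w = 0 := by
  have hinv : Function.Involutive fun w : ι → Bool => Function.update w i (!w i) := fun w => by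
    simp
  have := Equiv.sum_comp (hinv.toPerm _) g
  simp only [Function.Involutive.coe_toPerm, hg, sum_neg_distrib] at this
  linarith

def degreeOneChar : Option ι → (ι → Bool) → ℝ
  | none, _ => 1
  | some i, w => boolSign (w i)

lemma sum_degreeOneChar_mul [DecidableEq ι] (a b : Option ι) :
    ∑ w, degreeOneChar a w * degreeOneChar b w = if a = b then 2 ^ Fintype.card ι else 0 := by
  rcases a with _ | i <;> rcases b with _ | j
  · simp [degreeOneChar]
  · simpa [degreeOneChar] using sum_eq_zero_of_update_not j (g := fun w => boolSign (w j)) (by simp)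
  · simpa [degreeOneChar] using sum_eq_zero_of_update_not i (g := fun w => boolSign (w i)) (by simp)
  · by_cases hij : i = j
    · subst hij
      simp [degreeOneChar]
    · simp only [degreeOneChar, Option.some.injEq, hij, if_false]
      exact sum_eq_zero_of_update_not i (fun w => by simp [Function.update_of_ne (Ne.symm hij)])

lemma card_sq_add_sum_sq_le [DecidableEq ι] (L : Finset (ι → Bool)) :
    (#L : ℝ) ^ 2 + ∑ i, (∑ x ∈ L, boolSign (x i)) ^ 2 ≤ 2 ^ Fintype.card ι * #L := by
  have := sum_sq_sum_mul_le_of_orthogonal degreeOneChar (by positivity) sum_degreeOneChar_mul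
    (fun w => if w ∈ L then 1 else 0)
  simpa [Fintype.sum_option, degreeOneChar, sum_ite_mem] using this

lemma cast_hammingDist_eq_sum (x y : ι → Bool) :
    (hammingDist x y : ℝ) = ∑ i, (1 - boolSign (x i) * boolSign (y i)) / 2 := by
  rw [hammingDist, card_filter, Nat.cast_sum]
  refine sum_congr rfl fun i _ => ?_
  cases x i <;> cases y i <;> norm_num [boolSign]

lemma sum_sum_hammingDist (L : Finset (ι → Bool)) :
    ∑ x ∈ L, ∑ y ∈ L, (hammingDist x y : ℝ)
      = (Fintype.card ι * #L ^ 2 - ∑ i, (∑ x ∈ L, boolSign (x i)) ^ 2) / 2 := by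
  have hcoord : ∀ i, ∑ x ∈ L, ∑ y ∈ L, (1 - boolSign (x i) * boolSign (y i)) / 2
      = ((#L : ℝ) ^ 2 - (∑ x ∈ L, boolSign (x i)) ^ 2) / 2 := fun i => by
    simp_rw [← sum_div, sum_sub_distrib, sq, sum_mul_sum, sum_const, nsmul_eq_mul, mul_one]
  calc ∑ x ∈ L, ∑ y ∈ L, (hammingDist x y : ℝ)
      = ∑ i, ∑ x ∈ L, ∑ y ∈ L, (1 - boolSign (x i) * boolSign (y i)) / 2 := by
        simp_rw [cast_hammingDist_eq_sum]
        exact (sum_congr rfl fun x _ => sum_comm).trans sum_comm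
    _ = _ := by
        simp_rw [hcoord, ← sum_div, sum_sub_distrib, sum_const, card_univ, nsmul_eq_mul]

end BinaryWords

/-- The average Hamming distance of a binary code `L` of length `m`,
`ahd(L) = (1/|L|²) · Σ_{x∈L} Σ_{y∈L} hd(x,y)` (over all ordered pairs). -/
noncomputable def ahd {m : ℕ} (L : Finset (Fin m → Bool)) : ℝ :=
  (1 / (L.card : ℝ) ^ 2) * ∑ x ∈ L, ∑ y ∈ L, (hammingDist x y : ℝ)

/-- A binary code of length `m ≥ 1` with cardinality `M = |L|` satisfies
`ahd(L) ≥ (m+1)/2 − 2^(m−1)/M`. -/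
theorem ahd_lower_bound (m : ℕ) (hm : 1 ≤ m) (L : Finset (Fin m → Bool))
    (hL : L.Nonempty) :
    ((m : ℝ) + 1) / 2 - (2 : ℝ) ^ (m - 1) / (L.card : ℝ) ≤ ahd L := by
  have hM : (0 : ℝ) < #L := by exact_mod_cast hL.card_pos
  have hpow : (2 : ℝ) ^ m = 2 * 2 ^ (m - 1) := by rw [← pow_succ', Nat.sub_add_cancel hm]
  have hsum : ((m : ℝ) + 1) / 2 * #L ^ 2 - 2 ^ (m - 1) * #L
      ≤ ∑ x ∈ L, ∑ y ∈ L, (hammingDist x y : ℝ) := by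
    have hbessel := card_sq_add_sum_sq_le L
    rw [Fintype.card_fin, hpow] at hbessel
    rw [sum_sum_hammingDist, Fintype.card_fin]
    linarith
  calc ((m : ℝ) + 1) / 2 - (2 : ℝ) ^ (m - 1) / #L
      = (((m : ℝ) + 1) / 2 * #L ^ 2 - 2 ^ (m - 1) * #L) / #L ^ 2 := by field_simp
    _ ≤ ahd L := by rw [ahd, one_div, inv_mul_eq_div]; gcongr
end

section
/- Let m ≥ 1 and let L be a binary code of length m. Then the average Hamming distance of L satisfies ahd(L) ≤ 2·ahw(L) − 2·ahw(L)²/m. -/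
/-- The Hamming weight of a binary vector: the number of nonzero coordinates. -/
def hw {m : ℕ} (x : Fin m → Bool) : ℕ :=
  (Finset.univ.filter fun i => x i = true).card

/-- The average Hamming weight of a binary code `L`,
`ahw(L) = (1/|L|) · Σ_{x∈L} hw(x)`. -/
noncomputable def ahw {m : ℕ} (L : Finset (Fin m → Bool)) : ℝ :=
  (1 / (L.card : ℝ)) * ∑ x ∈ L, (hw x : ℝ)

/-!
If a fraction `p i` of the codewords has a `1` in coordinate `i`, then counting ordered pairs
coordinate by coordinate gives `ahw L = ∑ i, p i` and `ahd L = ∑ i, 2 * p i * (1 - p i)`, since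
a pair differs in coordinate `i` exactly when one word has a `1` there and the other a `0`.
The bound is then the Cauchy–Schwarz inequality `(∑ i, p i) ^ 2 ≤ m * ∑ i, p i ^ 2`.
-/

open Finset

theorem sum_sum_boole_ne {α : Type*} (s : Finset α) (f : α → Bool) :
    ∑ x ∈ s, ∑ y ∈ s, (if f x ≠ f y then 1 else 0 : ℕ) =
      2 * #{x ∈ s | f x} * #{x ∈ s | ¬ f x} := by
  simp only [sum_boole, Nat.cast_id]
  rw [← sum_filter_add_sum_filter_not s (fun x => f x = true)]
  have h_true : ∀ x ∈ s.filter (fun x => f x = true),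
      #{y ∈ s | f x ≠ f y} = #{y ∈ s | ¬ f y} := by
    intro x hx
    rw [(mem_filter.1 hx).2]
    simp
  have h_false : ∀ x ∈ s.filter (fun x => ¬ f x = true),
      #{y ∈ s | f x ≠ f y} = #{y ∈ s | f y} := by
    intro x hx
    rw [Bool.eq_false_iff.2 (mem_filter.1 hx).2]
    simp
  rw [sum_congr rfl h_true, sum_congr rfl h_false, sum_const, sum_const, smul_eq_mul,
    smul_eq_mul]
  ring

theorem sum_sum_hammingDist_eq {ι : Type*} [Fintype ι] (L : Finset (ι → Bool)) :
    ∑ x ∈ L, ∑ y ∈ L, hammingDist x y = ∑ i, 2 * #{x ∈ L | x i} * #{x ∈ L | ¬ x i} := by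
  have h_dist : ∀ x y : ι → Bool, hammingDist x y = ∑ i, if x i ≠ y i then 1 else 0 :=
    fun x y => card_filter _ _
  simp only [h_dist]
  rw [sum_congr rfl fun x _ => sum_comm, sum_comm]
  exact sum_congr rfl fun i _ => sum_sum_boole_ne L (· i)

theorem sum_hw_eq {m : ℕ} (L : Finset (Fin m → Bool)) :
    ∑ x ∈ L, hw x = ∑ i, #{x ∈ L | x i} := by
  simp only [hw, card_filter]
  exact sum_comm

noncomputable def coordFreq {m : ℕ} (L : Finset (Fin m → Bool)) (i : Fin m) : ℝ :=
  #{x ∈ L | x i} / #L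

theorem ahw_eq_sum_coordFreq {m : ℕ} (L : Finset (Fin m → Bool)) :
    ahw L = ∑ i, coordFreq L i := by
  rw [ahw, ← Nat.cast_sum, sum_hw_eq, Nat.cast_sum, mul_sum]
  exact sum_congr rfl fun i _ => one_div_mul_eq_div _ _

theorem ahd_eq_sum_coordFreq {m : ℕ} (L : Finset (Fin m → Bool)) :
    ahd L = ∑ i, 2 * coordFreq L i * (1 - coordFreq L i) := by
  rcases L.eq_empty_or_nonempty with rfl | hL
  · simp [ahd, coordFreq]
  have hn : (#L : ℝ) ≠ 0 := by exact_mod_cast hL.card_ne_zero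
  rw [ahd]
  simp only [← Nat.cast_sum, sum_sum_hammingDist_eq]
  push_cast
  rw [mul_sum]
  refine sum_congr rfl fun i _ => ?_
  have h_split : (#{x ∈ L | ¬ x i} : ℝ) = #L - #{x ∈ L | x i} := by
    rw [eq_sub_iff_add_eq, add_comm]
    exact_mod_cast card_filter_add_card_filter_not _
  rw [h_split, coordFreq]
  field_simp

theorem sum_two_mul_one_sub_le {ι : Type*} (s : Finset ι) (p : ι → ℝ) :
    ∑ i ∈ s, 2 * p i * (1 - p i) ≤ 2 * ∑ i ∈ s, p i - 2 * (∑ i ∈ s, p i) ^ 2 / #s := by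
  have h_cs : (∑ i ∈ s, p i) ^ 2 / #s ≤ ∑ i ∈ s, p i ^ 2 :=
    div_le_of_le_mul₀ (by positivity) (by positivity)
      ((sq_sum_le_card_mul_sum_sq ..).trans_eq (mul_comm ..))
  have h_expand : ∑ i ∈ s, 2 * p i * (1 - p i) = 2 * ∑ i ∈ s, p i - 2 * ∑ i ∈ s, p i ^ 2 := by
    rw [mul_sum, mul_sum, ← sum_sub_distrib]
    exact sum_congr rfl fun i _ => by ring
  rw [h_expand, mul_div_assoc]
  linarith

theorem ahd_upper_bound_ahw_general (m : ℕ) (L : Finset (Fin m → Bool)) :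
    ahd L ≤ 2 * ahw L - 2 * (ahw L) ^ 2 / (m : ℝ) := by
  rw [ahd_eq_sum_coordFreq, ahw_eq_sum_coordFreq]
  simpa only [card_univ, Fintype.card_fin] using sum_two_mul_one_sub_le univ (coordFreq L)

/-- A binary code of length `m ≥ 1` satisfies `ahd(L) ≤ 2·ahw(L) − 2·ahw(L)²/m`. -/
theorem ahd_upper_bound_ahw (m : ℕ) (hm : 1 ≤ m) (L : Finset (Fin m → Bool))
    (hL : L.Nonempty) :
    ahd L ≤ 2 * ahw L - 2 * (ahw L) ^ 2 / (m : ℝ) :=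
  ahd_upper_bound_ahw_general m L
end
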